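/- Let U be a unitary operator on a Hilbert space H, p an idempotent ultrafilter on ℕ, and f ∈ H with f* := p-lim_{n∈ℕ} U^n f (weak limit). Then f* is a rigid vector for U: there exists an increasing sequence (n_k) with U^{n_k} f* → f* in norm. -/

import Mathlib

open Filter Topology

attribute [local instance] Ultrafilter.add

/-!
Since `p + p = p`, the weak `p`-limit `f*` of `Uⁿ f` is also the weak `p`-limit of `Uⁿ f*`:
`⟪Uⁿ f*, g⟫` is the `p`-limit in `m` of `⟪Uⁿ⁺ᵐ f, g⟫`, and a `p`-limit of `p`-limits of a
function of `n + m` is its `p`-limit. As `‖Uⁿ f*‖ = ‖f*‖`, weak convergence upgrades to norm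
convergence along `p`. Finally `p` is not principal (`a + a ≠ a` in `ℕ+`), so every set in `p`
is infinite, and a strictly increasing sequence can be extracted.
-/

theorem Ultrafilter.le_cofinite_of_add_self_eq {M : Type*} [Add M] {p : Ultrafilter M}
    (hp : p + p = p) (h : ∀ a : M, a + a ≠ a) : (p : Filter M) ≤ cofinite := by
  refine p.le_cofinite_or_eq_pure.resolve_right ?_
  rintro ⟨a, rfl⟩
  have haa : ∀ᶠ m in ↑((pure a : Ultrafilter M) + pure a), m = a := by
    rw [hp]
    exact eventually_pure.2 rfl
  exact h a haa

theorem Ultrafilter.tendsto_of_tendsto_add_left {M X : Type*} [Add M] [TopologicalSpace X]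
    [RegularSpace X] {p : Ultrafilter M} (hp : p + p = p) {φ ψ : M → X} {c : X}
    (hφ : Tendsto φ p (𝓝 c)) (hψ : ∀ n, Tendsto (fun m => φ (n + m)) p (𝓝 (ψ n))) :
    Tendsto ψ p (𝓝 c) := by
  refine (closed_nhds_basis c).tendsto_right_iff.2 fun V ⟨hV, hVc⟩ => ?_
  have hφV : ∀ᶠ n in ↑(p + p), φ n ∈ V := by
    rw [hp]
    exact hφ hV
  filter_upwards [(p.eventually_add p _).1 hφV] with n hn
  exact hVc.mem_of_tendsto (hψ n) hn

theorem exists_strictMono_forall_mem {α : Type*} [LinearOrder α] [LocallyFiniteOrderBot α]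
    (A : ℕ → Set α) (hA : ∀ k, (A k).Infinite) :
    ∃ φ : ℕ → α, StrictMono φ ∧ ∀ k, φ k ∈ A k := by
  choose next hnext_mem hlt_next using fun k => (hA k).exists_gt
  obtain ⟨a, ha⟩ := (hA 0).nonempty
  refine ⟨fun k => Nat.rec a (fun k prev => next (k + 1) prev) k,
    strictMono_nat_of_lt_succ fun k => hlt_next _ _, ?_⟩
  rintro (_ | k)
  · exact ha
  · exact hnext_mem _ _

theorem Filter.Tendsto.exists_strictMono_tendsto_of_le_cofinite {α X : Type*} [LinearOrder α]
    [LocallyFiniteOrderBot α] [TopologicalSpace X] [FirstCountableTopology X] {l : Filter α}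
    [l.NeBot] (hl : l ≤ cofinite) {u : α → X} {y : X} (hu : Tendsto u l (𝓝 y)) :
    ∃ φ : ℕ → α, StrictMono φ ∧ Tendsto (u ∘ φ) atTop (𝓝 y) := by
  obtain ⟨V, hV⟩ := (𝓝 y).exists_antitone_basis
  have hinf : ∀ k, (u ⁻¹' V k).Infinite := fun k =>
    frequently_cofinite_iff_infinite.1 ((hu.eventually_mem (hV.mem k)).frequently.filter_mono hl)
  obtain ⟨φ, hφ, hφV⟩ := exists_strictMono_forall_mem _ hinf
  exact ⟨φ, hφ, hV.tendsto hφV⟩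

section InnerProductSpace

variable {𝕜 E : Type*} [RCLike 𝕜] [NormedAddCommGroup E] [InnerProductSpace 𝕜 E]

theorem ContinuousLinearMap.tendsto_inner_apply [CompleteSpace E] (T : E →L[𝕜] E) {ι : Type*}
    {l : Filter ι} {x : ι → E} {y : E}
    (h : ∀ g, Tendsto (fun i => inner 𝕜 (x i) g) l (𝓝 (inner 𝕜 y g))) (g : E) :
    Tendsto (fun i => inner 𝕜 (T (x i)) g) l (𝓝 (inner 𝕜 (T y) g)) := by
  simpa only [adjoint_inner_right] using h (adjoint T g)

theorem norm_pow_apply_of_inner_map_map (U : E →L[𝕜] E)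
    (hU : ∀ f g : E, inner 𝕜 (U f) (U g) = inner 𝕜 f g) (n : ℕ) (x : E) :
    ‖(U ^ n) x‖ = ‖x‖ := by
  induction n with
  | zero => rfl
  | succ n ih =>
    rw [pow_succ', mul_apply_eq_comp, (LinearMap.norm_map_iff_inner_map_map U).2 hU, ih]

theorem tendsto_of_tendsto_inner_of_tendsto_norm {ι : Type*} {l : Filter ι} {x : ι → E} {y : E}
    (hweak : Tendsto (fun i => inner 𝕜 (x i) y) l (𝓝 (inner 𝕜 y y)))
    (hnorm : Tendsto (fun i => ‖x i‖) l (𝓝 ‖y‖)) :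
    Tendsto x l (𝓝 y) := by
  have hsq : Tendsto (fun i => ‖x i - y‖ ^ 2) l (𝓝 0) := by
    have hre := (RCLike.continuous_re.tendsto _).comp hweak
    have hlim := ((hnorm.pow 2).sub (hre.const_mul 2)).add_const (‖y‖ ^ 2)
    simp only [Function.comp_def, ← @norm_sub_sq 𝕜, sub_self, norm_zero] at hlim
    simpa using hlim
  rw [tendsto_iff_norm_sub_tendsto_zero]
  simpa using hsq.sqrt

end InnerProductSpace

theorem plim_is_rigid_vector_general {H : Type*} [NormedAddCommGroup H]
    [InnerProductSpace ℂ H] [CompleteSpace H]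
    (U : H →L[ℂ] H)
    (hU : ∀ f g : H, (inner ℂ (U f) (U g) : ℂ) = inner ℂ f g)
    (p : Ultrafilter ℕ+) (hp : p + p = p) (f fstar : H)
    (hf : ∀ g : H,
      Tendsto (fun n : ℕ+ => (inner ℂ ((U ^ (n : ℕ)) f) g : ℂ)) ↑p (𝓝 (inner ℂ fstar g))) :
    ∃ nk : ℕ → ℕ+, StrictMono nk ∧
      Tendsto (fun k : ℕ => (U ^ ((nk k : ℕ))) fstar) atTop (𝓝 fstar) := by
  have hweak : ∀ g : H,
      Tendsto (fun n : ℕ+ => inner ℂ ((U ^ (n : ℕ)) fstar) g) ↑p (𝓝 (inner ℂ fstar g)) :=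
    fun g => Ultrafilter.tendsto_of_tendsto_add_left hp (hf g) fun n => by
      simpa only [PNat.add_coe, pow_add, mul_apply_eq_comp] using
        (U ^ (n : ℕ)).tendsto_inner_apply hf g
  have hstrong : Tendsto (fun n : ℕ+ => (U ^ (n : ℕ)) fstar) ↑p (𝓝 fstar) :=
    tendsto_of_tendsto_inner_of_tendsto_norm (hweak fstar) <| by
      simp only [norm_pow_apply_of_inner_map_map U hU, tendsto_const_nhds]
  have hp_cofinite : (p : Filter ℕ+) ≤ cofinite :=
    Ultrafilter.le_cofinite_of_add_self_eq hp fun a h => by simpa using congrArg PNat.val h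
  exact hstrong.exists_strictMono_tendsto_of_le_cofinite hp_cofinite

/-- Let `U` be a unitary operator on a Hilbert space `H`, `p` an
idempotent ultrafilter on the positive natural numbers, and `f ∈ H` with
`f* = p-lim Uⁿ f` (weak limit). Then `f*` is a rigid vector for `U`: there is an increasing
sequence `(n_k)` with `U^{n_k} f* → f*` in norm. -/
theorem plim_is_rigid_vector {H : Type*} [NormedAddCommGroup H]
    [InnerProductSpace ℂ H] [CompleteSpace H]
    (U : H →L[ℂ] H)
    (hU : ∀ f g : H, (inner ℂ (U f) (U g) : ℂ) = inner ℂ f g)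
    (hUsurj : Function.Surjective U)
    (p : Ultrafilter ℕ+) (hp : p + p = p) (f fstar : H)
    (hf : ∀ g : H,
      Tendsto (fun n : ℕ+ => (inner ℂ ((U ^ (n : ℕ)) f) g : ℂ)) ↑p (𝓝 (inner ℂ fstar g))) :
    ∃ nk : ℕ → ℕ+, StrictMono nk ∧
      Tendsto (fun k : ℕ => (U ^ ((nk k : ℕ))) fstar) atTop (𝓝 fstar) :=
  plim_is_rigid_vector_general U hU p hp f fstar hf
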